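/- arXiv:0909.1927 — 8 statements merged into one kernel-verified Lean document; each statement's English description precedes it below -/
import Mathlib

section
/- If the polynomial ∑_{k=0}^n a_k z^k has only real and non-positive zeros (real coefficients), then the sequence a_0, ..., a_n is log-concave, i.e., a_k^2 ≥ a_{k-1} a_{k+1} for 1 ≤ k ≤ n-1. -/
open Polynomial Finset

/-- Strong log-concavity invariant for a nonnegative sequence. -/
def SProp (f : ℕ → ℝ) : Prop :=
  (∀ k, 0 ≤ f k) ∧ (∀ i j, i ≤ j → f i * f (j + 2) ≤ f (i + 1) * f (j + 1))

lemma sprop_step (f : ℕ → ℝ) (r : ℝ) (hr : 0 ≤ r) (hf : SProp f) :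
    SProp (fun k => (if k = 0 then 0 else f (k - 1)) + r * f k) := by
  obtain ⟨hpos, hS⟩ := hf
  constructor
  · intro k
    have := hpos k
    rcases k with _ | m
    · simp; positivity
    · simp only [Nat.succ_ne_zero, if_false, Nat.succ_sub_one]
      have := hpos m
      positivity
  · intro i j hij
    rcases i with _ | i'
    · -- i = 0
      show (0 + r * f 0) * ((if j + 2 = 0 then 0 else f (j + 2 - 1)) + r * f (j + 2)) ≤
        ((if 0 + 1 = 0 then 0 else f (0 + 1 - 1)) + r * f (0 + 1)) *
          ((if j + 1 = 0 then 0 else f (j + 1 - 1)) + r * f (j + 1))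
      simp only [Nat.add_eq_zero, Nat.succ_ne_zero, and_false, if_false, one_ne_zero,
        zero_add, Nat.succ_sub_one, Nat.add_sub_cancel]
      have h1 := hS 0 j (Nat.zero_le j)
      have h2 := hpos 0
      have h3 := hpos j
      have h4 := hpos (j + 1)
      have h5 := hpos (j + 2)
      have h6 := hpos 1
      nlinarith [mul_nonneg (mul_nonneg hr h2) h4, mul_nonneg h2 h3,
        mul_nonneg (mul_nonneg hr h6) h3, mul_le_mul_of_nonneg_left h1 (mul_self_nonneg r)]
    · -- i = i' + 1, so j = j' + 1 with i' ≤ j'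
      rcases j with _ | j'
      · omega
      have hij' : i' ≤ j' := by omega
      simp only [Nat.succ_ne_zero, if_false, Nat.succ_sub_one, Nat.add_sub_cancel,
        Nat.add_eq_zero, and_false]
      have h0 := hS i' j' hij'
      have h1 := hS i' (j' + 1) (by omega)
      have h2 := hS (i' + 1) (j' + 1) (by omega)
      have h3 : f (i' + 1) * f (j' + 2) ≤ f (i' + 2) * f (j' + 1) := by
        rcases eq_or_lt_of_le hij' with h | h
        · subst h; ring_nf; nlinarith [hpos (i' + 1), hpos (i' + 2)]
        · exact hS (i' + 1) j' (by omega)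
      have hcross : f i' * f (j' + 3) ≤ f (i' + 2) * f (j' + 1) :=
        le_trans h1 h3
      nlinarith [h0,
        mul_le_mul_of_nonneg_left hcross hr,
        mul_le_mul_of_nonneg_left h2 (mul_self_nonneg r)]

lemma coeff_linear_mul (r : ℝ) (Q : ℝ[X]) (k : ℕ) :
    ((X + C r) * Q).coeff k = (if k = 0 then 0 else Q.coeff (k - 1)) + r * Q.coeff k := by
  rw [add_mul, coeff_add, coeff_C_mul]
  rcases k with _ | m
  · simp [Polynomial.mul_coeff_zero]
  · simp [coeff_X_mul]

lemma sprop_prod (M : Multiset ℝ) (hM : ∀ r ∈ M, 0 ≤ r) :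
    SProp (fun k => ((M.map (fun r => X + C r)).prod).coeff k) := by
  induction M using Multiset.induction_on with
  | empty =>
    simp only [Multiset.map_zero, Multiset.prod_zero]
    constructor
    · intro k
      simp only [coeff_one]
      split <;> norm_num
    · intro i j hij
      show (1 : ℝ[X]).coeff i * (1 : ℝ[X]).coeff (j + 2) ≤
        (1 : ℝ[X]).coeff (i + 1) * (1 : ℝ[X]).coeff (j + 1)
      have h2 : (1 : ℝ[X]).coeff (j + 2) = 0 := by
        rw [coeff_one]; simp
      rw [h2, mul_zero]
      apply mul_nonneg <;> (rw [coeff_one]; split <;> norm_num)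
  | cons r M ih =>
    have hr : 0 ≤ r := hM r (Multiset.mem_cons_self r M)
    have hM' : ∀ x ∈ M, 0 ≤ x := fun x hx => hM x (Multiset.mem_cons_of_mem hx)
    have h := sprop_step _ r hr (ih hM')
    simp only [Multiset.map_cons, Multiset.prod_cons]
    have heq : (fun k => ((X + C r) * ((M.map (fun r => X + C r)).prod)).coeff k)
        = fun k => (if k = 0 then 0 else ((M.map (fun r => X + C r)).prod).coeff (k - 1))
          + r * ((M.map (fun r => X + C r)).prod).coeff k :=
      funext (coeff_linear_mul r _)
    rw [heq]
    exact h

lemma myFactorization : ∀ (d : ℕ) (P : ℝ[X]), P.natDegree ≤ d →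
    (∀ z : ℂ, (P.map (algebraMap ℝ ℂ)).eval z = 0 → ∃ x : ℝ, x ≤ 0 ∧ z = (x : ℂ)) →
    ∃ (c : ℝ) (M : Multiset ℝ), (∀ r ∈ M, 0 ≤ r) ∧
      P = C c * (M.map (fun r => X + C r)).prod := by
  intro d
  induction d with
  | zero =>
    intro P hd _
    refine ⟨P.coeff 0, 0, by simp, ?_⟩
    rw [Multiset.map_zero, Multiset.prod_zero, mul_one]
    exact Polynomial.eq_C_of_natDegree_le_zero hd
  | succ d ih =>
    intro P hd hroots
    rcases Nat.eq_zero_or_pos P.natDegree with h0 | h0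
    · refine ⟨P.coeff 0, 0, by simp, ?_⟩
      rw [Multiset.map_zero, Multiset.prod_zero, mul_one]
      exact Polynomial.eq_C_of_natDegree_le_zero (le_of_eq h0)
    · have hP0 : P ≠ 0 := fun h => by simp [h] at h0
      have hmapne : P.map (algebraMap ℝ ℂ) ≠ 0 := by
        simpa using (Polynomial.map_ne_zero_iff (algebraMap ℝ ℂ).injective).mpr hP0
      have hdeg : 0 < (P.map (algebraMap ℝ ℂ)).natDegree := by
        rwa [Polynomial.natDegree_map_eq_of_injective (algebraMap ℝ ℂ).injective]
      obtain ⟨z, hz⟩ := Complex.exists_root (Polynomial.natDegree_pos_iff_degree_pos.mp hdeg)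
      obtain ⟨x, hx0, hxz⟩ := hroots z hz
      have hroot : P.eval x = 0 := by
        have h1 : (P.map (algebraMap ℝ ℂ)).eval ((algebraMap ℝ ℂ) x) = 0 := by
          rw [show (algebraMap ℝ ℂ) x = (x : ℂ) from rfl, ← hxz]; exact hz
        rw [Polynomial.eval_map, Polynomial.eval₂_at_apply] at h1
        simpa using h1
      obtain ⟨Q, hQ⟩ := (Polynomial.dvd_iff_isRoot.mpr hroot)
      have hQne : Q ≠ 0 := fun h => by simp [h] at hQ; exact hP0 hQ
      have hdegQ : Q.natDegree ≤ d := by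
        have : P.natDegree = 1 + Q.natDegree := by
          rw [hQ, Polynomial.natDegree_mul (Polynomial.X_sub_C_ne_zero x) hQne,
            Polynomial.natDegree_X_sub_C]
        omega
      have hQroots : ∀ z : ℂ, (Q.map (algebraMap ℝ ℂ)).eval z = 0 →
          ∃ y : ℝ, y ≤ 0 ∧ z = (y : ℂ) := by
        intro w hw
        apply hroots w
        rw [hQ, Polynomial.map_mul, Polynomial.eval_mul, hw, mul_zero]
      obtain ⟨c, M, hMpos, hfac⟩ := ih Q hdegQ hQroots
      refine ⟨c, (-x) ::ₘ M, ?_, ?_⟩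
      · intro s hs
        rcases Multiset.mem_cons.mp hs with h | h
        · subst h; linarith
        · exact hMpos s h
      · rw [Multiset.map_cons, Multiset.prod_cons, hQ, hfac]
        have : X - C x = X + C (-x) := by rw [map_neg]; ring
        rw [this]; ring

theorem stmt1 (n : ℕ) (a : ℕ → ℝ)
    (hP : ∀ z : ℂ,
      ((∑ k ∈ Finset.range (n + 1), Polynomial.C (a k) * Polynomial.X ^ k).map
        (algebraMap ℝ ℂ)).eval z = 0 → ∃ x : ℝ, x ≤ 0 ∧ z = (x : ℂ)) :
    ∀ k : ℕ, 1 ≤ k → k ≤ n - 1 → a (k - 1) * a (k + 1) ≤ a k ^ 2 := by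
  intro k hk1 hkn
  set P : ℝ[X] := ∑ k ∈ Finset.range (n + 1), Polynomial.C (a k) * Polynomial.X ^ k with hPdef
  have hcoeff : ∀ m, m ≤ n → P.coeff m = a m := by
    intro m hm
    rw [hPdef, Polynomial.finset_sum_coeff]
    rw [Finset.sum_eq_single m]
    · simp
    · intro b _ hbm
      simp [Polynomial.coeff_C_mul, Polynomial.coeff_X_pow, Ne.symm hbm]
    · intro hm'
      exact absurd (Finset.mem_range.mpr (by omega)) hm'
  obtain ⟨c, M, hMpos, hfac⟩ := myFactorization P.natDegree P le_rfl hP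
  obtain ⟨hpos, hS⟩ := sprop_prod M hMpos
  set f : ℕ → ℝ := fun k => ((M.map (fun r => X + C r)).prod).coeff k with hf
  have hane : ∀ m, m ≤ n → a m = c * f m := by
    intro m hm
    rw [← hcoeff m hm, hfac, Polynomial.coeff_C_mul]
  have hn2 : 2 ≤ n := by omega
  have e1 : a (k - 1) = c * f (k - 1) := hane _ (by omega)
  have e2 : a (k + 1) = c * f (k + 1) := hane _ (by omega)
  have e3 : a k = c * f k := hane _ (by omega)
  have hSk := hS (k - 1) (k - 1) le_rfl
  have hk1' : k - 1 + 1 = k := by omega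
  have hk2' : k - 1 + 2 = k + 1 := by omega
  rw [hk1', hk2'] at hSk
  rw [e1, e2, e3]
  nlinarith [sq_nonneg c, hSk]
end

section
/- For n variables z_1,...,z_n, the identity ∑_{k=0}^n (e_k(z)^2 - e_{k-1}(z)e_{k+1}(z)) = e_n(z) · ∑_{k=0}^{⌊n/2⌋} C_k · e_{n-2k}(z_1 + 1/z_1, ..., z_n + 1/z_n) holds, where C_k = binom(2k,k)/(k+1) is the k-th Catalan number and e_j denotes the elementary symmetric polynomial (with e_j = 0 for j outside {0,...,n}). -/
/-!
Let `P(X) = ∏ (1 + z_i X) = ∑ e_k X^k`. Its reversal is `X^n P(1/X) = ∏ (z_i + X)`, and the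
coefficient of `X^(n+m)` in `P(X) · X^n P(1/X)` is `∑_k e_k e_(k+m)`, so the left side is the
coefficient of `X^n` minus that of `X^(n+2)`. Factorwise `(1 + z X)(z + X) = z (w X + 1 + X^2)`
with `w = z + z⁻¹`, so the product is `e_n ∑_j e_j(w) X^j (1 + X^2)^(n-j)`. In `(1 + X^2)^r` the
coefficients of `X^r` and `X^(r+2)` differ by `binom(2k, k) - binom(2k, k+1) = C_k` if `r = 2k`
and both vanish if `r` is odd.
-/

open Finset Polynomial

section ElemSymm

variable {ι R : Type*} [Fintype ι] [CommSemiring R]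

def elemSymm (f : ι → R) (k : ℕ) : R := ∑ S ∈ univ.powersetCard k, ∏ i ∈ S, f i

lemma elemSymm_eq_zero_of_card_lt (f : ι → R) {k : ℕ} (hk : Fintype.card ι < k) :
    elemSymm f k = 0 := by
  rw [elemSymm, powersetCard_eq_empty.2 (by rwa [card_univ]), sum_empty]

lemma elemSymm_card (f : ι → R) : elemSymm f (Fintype.card ι) = ∏ i, f i := by
  simp [elemSymm, ← card_univ, powersetCard_self]

lemma map_elemSymm {S : Type*} [CommSemiring S] (φ : R →+* S) (f : ι → R) (k : ℕ) :
    φ (elemSymm f k) = elemSymm (fun i => φ (f i)) k := by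
  simp [elemSymm, map_sum, map_prod]

lemma prod_mul_add_eq_sum_elemSymm (f : ι → R) (x y : R) :
    ∏ i, (f i * x + y) =
      ∑ j ∈ range (Fintype.card ι + 1), elemSymm f j * x ^ j * y ^ (Fintype.card ι - j) := by
  classical
  rw [prod_add, sum_powerset, card_univ]
  refine sum_congr rfl fun j _ => ?_
  rw [elemSymm, sum_mul, sum_mul]
  refine sum_congr rfl fun S hS => ?_
  rw [mem_powersetCard] at hS
  rw [prod_mul_distrib, prod_const, prod_const, card_sdiff_of_subset hS.1, hS.2, card_univ]

lemma prod_C_mul_X_add_one_eq_sum (f : ι → R) :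
    ∏ i, (C (f i) * X + 1) = ∑ a ∈ range (Fintype.card ι + 1), C (elemSymm f a) * X ^ a := by
  rw [prod_mul_add_eq_sum_elemSymm]
  refine sum_congr rfl fun a _ => ?_
  rw [map_elemSymm, one_pow, mul_one]

lemma prod_C_add_X_eq_sum (f : ι → R) :
    ∏ i, (C (f i) + X) =
      ∑ b ∈ range (Fintype.card ι + 1), C (elemSymm f b) * X ^ (Fintype.card ι - b) := by
  convert prod_mul_add_eq_sum_elemSymm (fun i => C (f i)) 1 X using 1
  · simp_rw [mul_one]
  · refine sum_congr rfl fun b _ => ?_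
    rw [map_elemSymm, one_pow, mul_one]

lemma coeff_prod_C_mul_X_add_one_mul_prod_C_add_X (f : ι → R) (m : ℕ) :
    ((∏ i, (C (f i) * X + 1)) * ∏ i, (C (f i) + X)).coeff (Fintype.card ι + m) =
      ∑ k ∈ range (Fintype.card ι + 1), elemSymm f k * elemSymm f (k + m) := by
  rw [prod_C_mul_X_add_one_eq_sum, prod_C_add_X_eq_sum, sum_mul_sum]
  have monomial_mul (x y : R) (a c : ℕ) :
      C x * X ^ a * (C y * X ^ c) = C (x * y) * X ^ (a + c) := by
    rw [C_mul, pow_add]; ring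
  simp_rw [finsetSum_coeff, monomial_mul, coeff_C_mul_X_pow]
  rw [sum_comm]
  refine sum_congr rfl fun b hb => ?_
  have hbn : b ≤ Fintype.card ι := Nat.lt_succ_iff.mp (mem_range.mp hb)
  have hexp (a : ℕ) : Fintype.card ι + m = a + (Fintype.card ι - b) ↔ a = b + m := by omega
  simp_rw [hexp, sum_ite_eq', mem_range]
  split_ifs with h
  · ring
  · rw [elemSymm_eq_zero_of_card_lt f (show Fintype.card ι < b + m by omega), mul_zero]

end ElemSymm

lemma catalan_add_choose_eq_centralBinom (k : ℕ) :
    catalan k + (2 * k).choose (k + 1) = k.centralBinom := by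
  have h := Nat.choose_succ_right_eq (2 * k) k
  rw [← Nat.centralBinom_eq_two_mul_choose, ← succ_mul_catalan_eq_centralBinom,
    show 2 * k - k = k by omega] at h
  have : (k + 1) * (catalan k + (2 * k).choose (k + 1)) = (k + 1) * k.centralBinom := by
    rw [← succ_mul_catalan_eq_centralBinom]; linear_combination h
  exact Nat.eq_of_mul_eq_mul_left k.succ_pos this

lemma sum_range_ite_two_dvd {M : Type*} [AddCommMonoid M] (g : ℕ → M) (n : ℕ) :
    ∑ r ∈ range (n + 1), (if 2 ∣ r then g (r / 2) else 0) = ∑ k ∈ range (n / 2 + 1), g k := by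
  induction n with
  | zero => simp
  | succ n ih =>
    rw [sum_range_succ, ih]
    by_cases h : 2 ∣ n + 1
    · rw [if_pos h, show (n + 1) / 2 = n / 2 + 1 by omega, sum_range_succ _ (n / 2 + 1)]
    · rw [if_neg h, add_zero, show (n + 1) / 2 = n / 2 by omega]

lemma sum_range_ite_pred_mul_succ {R : Type*} [CommSemiring R] (e : ℕ → R) {n : ℕ}
    (h : e (n + 2) = 0) :
    ∑ k ∈ range (n + 1), (if k = 0 then 0 else e (k - 1)) * e (k + 1) =
      ∑ k ∈ range (n + 1), e k * e (k + 2) := by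
  rw [sum_range_succ', sum_range_succ, h, mul_zero, add_zero, if_pos rfl, zero_mul, add_zero]
  exact sum_congr rfl fun k _ => by rw [if_neg k.succ_ne_zero, Nat.add_sub_cancel]

lemma coeff_one_add_X_sq_pow (R : Type*) [CommSemiring R] (r i : ℕ) :
    ((1 + X ^ 2 : R[X]) ^ r).coeff i = if 2 ∣ i then (r.choose (i / 2) : R) else 0 := by
  have h : (1 + X ^ 2 : R[X]) ^ r = expand R 2 ((1 + X) ^ r) := by
    rw [map_pow, map_add, map_one, expand_X]
  rw [h, coeff_expand two_pos, coeff_one_add_X_pow]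

lemma coeff_one_add_X_sq_pow_sub_coeff_add_two (R : Type*) [CommRing R] (r : ℕ) :
    ((1 + X ^ 2 : R[X]) ^ r).coeff r - ((1 + X ^ 2 : R[X]) ^ r).coeff (r + 2) =
      if 2 ∣ r then (catalan (r / 2) : R) else 0 := by
  rw [coeff_one_add_X_sq_pow, coeff_one_add_X_sq_pow]
  by_cases h : 2 ∣ r
  · obtain ⟨k, rfl⟩ := h
    rw [if_pos ⟨k, rfl⟩, if_pos ⟨k + 1, by ring⟩, if_pos ⟨k, rfl⟩,
      show (2 * k + 2) / 2 = k + 1 by omega, Nat.mul_div_cancel_left k two_pos,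
      ← Nat.centralBinom_eq_two_mul_choose, ← catalan_add_choose_eq_centralBinom]
    push_cast
    ring
  · rw [if_neg h, if_neg (by omega), if_neg h, sub_zero]

lemma coeff_prod_C_mul_X_add_one_add_X_sq_sub {ι R : Type*} [Fintype ι] [CommRing R]
    (w : ι → R) :
    (∏ i, (C (w i) * X + (1 + X ^ 2))).coeff (Fintype.card ι) -
        (∏ i, (C (w i) * X + (1 + X ^ 2))).coeff (Fintype.card ι + 2) =
      ∑ k ∈ range (Fintype.card ι / 2 + 1), catalan k * elemSymm w (Fintype.card ι - 2 * k) := by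
  rw [prod_mul_add_eq_sum_elemSymm, finsetSum_coeff, finsetSum_coeff, ← sum_sub_distrib,
    ← sum_range_ite_two_dvd, ← sum_range_reflect]
  refine sum_congr rfl fun j hj => ?_
  set n := Fintype.card ι
  have hjn : j ≤ n := Nat.lt_succ_iff.mp (mem_range.mp hj)
  rw [Nat.add_sub_cancel, ← map_elemSymm C w (n - j), mul_assoc, coeff_C_mul, coeff_C_mul,
    coeff_X_pow_mul', coeff_X_pow_mul', if_pos (Nat.sub_le n j), if_pos (by omega),
    show n - (n - j) = j by omega, show n + 2 - (n - j) = j + 2 by omega, ← mul_sub,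
    coeff_one_add_X_sq_pow_sub_coeff_add_two]
  split_ifs with h
  · rw [show n - 2 * (j / 2) = n - j by omega, mul_comm]
  · rw [mul_zero]

lemma C_mul_X_add_one_mul_C_add_X {K : Type*} [Field K] {z : K} (hz : z ≠ 0) :
    (C z * X + 1) * (C z + X) = C z * (C (z + z⁻¹) * X + (1 + X ^ 2)) := by
  have h : C z * C (z + z⁻¹) = C z * C z + 1 := by
    rw [← C_mul, ← C_mul, mul_add, mul_inv_cancel₀ hz, C_add, C_1]
  linear_combination X * h.symm

theorem stmt3 (K : Type*) [Field K] (n : ℕ) (z : Fin n → K) (hz : ∀ i, z i ≠ 0) :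
    (∑ k ∈ Finset.range (n + 1),
        ((∑ S ∈ Finset.univ.powersetCard k, ∏ i ∈ S, z i) ^ 2 -
          (if k = 0 then 0 else ∑ S ∈ Finset.univ.powersetCard (k - 1), ∏ i ∈ S, z i) *
            ∑ S ∈ Finset.univ.powersetCard (k + 1), ∏ i ∈ S, z i)) =
      (∑ S ∈ Finset.univ.powersetCard n, ∏ i ∈ S, z i) *
        ∑ k ∈ Finset.range (n / 2 + 1),
          (catalan k : K) *
            ∑ S ∈ Finset.univ.powersetCard (n - 2 * k), ∏ i ∈ S, (z i + (z i)⁻¹) := by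
  change ∑ k ∈ range (n + 1), (elemSymm z k ^ 2 -
      (if k = 0 then 0 else elemSymm z (k - 1)) * elemSymm z (k + 1)) =
    elemSymm z n *
      ∑ k ∈ range (n / 2 + 1), catalan k * elemSymm (fun i => z i + (z i)⁻¹) (n - 2 * k)
  set P := (∏ i, (C (z i) * X + 1)) * ∏ i, (C (z i) + X)
  set Q := ∏ i, (C (z i + (z i)⁻¹) * X + (1 + X ^ 2))
  have hPQ : P = C (elemSymm z n) * Q := by
    have he : elemSymm z n = ∏ i, z i := by simpa only [Fintype.card_fin] using elemSymm_card z
    simp only [P, Q, he, map_prod, ← prod_mul_distrib]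
    exact prod_congr rfl fun i _ => C_mul_X_add_one_mul_C_add_X (hz i)
  have hP (m : ℕ) : P.coeff (n + m) = ∑ k ∈ range (n + 1), elemSymm z k * elemSymm z (k + m) := by
    simpa only [Fintype.card_fin] using coeff_prod_C_mul_X_add_one_mul_prod_C_add_X z m
  have hQ := coeff_prod_C_mul_X_add_one_add_X_sq_sub fun i => z i + (z i)⁻¹
  rw [Fintype.card_fin] at hQ
  have hvanish : elemSymm z (n + 2) = 0 :=
    elemSymm_eq_zero_of_card_lt z (by rw [Fintype.card_fin]; omega)
  calc _ = P.coeff (n + 0) - P.coeff (n + 2) := by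
        rw [sum_sub_distrib, sum_range_ite_pred_mul_succ _ hvanish, hP, hP]
        simp_rw [sq, add_zero]
    _ = _ := by rw [hPQ, coeff_C_mul, coeff_C_mul, ← mul_sub, add_zero, hQ]
end

section
/- For any sequence μ_0, μ_1, ... of complex numbers and n variables z_1,...,z_n (all nonzero), the identity ∑_{i ≤ j} μ_{j-i} e_i(z) e_j(z) = e_n(z) · ∑_{k=0}^n γ_k e_{n-k}(z + 1/z) holds, where γ_k = ∑_{j=0}^{⌊k/2⌋} binom(k,j) μ_{k-2j} and z + 1/z denotes the tuple (z_1 + 1/z_1, ..., z_n + 1/z_n). -/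
open Finset

lemma gamma_collapse {α : Type*} [DecidableEq α] (μ : ℕ → ℂ) (E : Finset α) :
    (∑ X ∈ E.powerset, if 2 * X.card ≤ E.card then μ (E.card - 2 * X.card) else 0)
      = ∑ m ∈ Finset.range (E.card / 2 + 1), (Nat.choose E.card m : ℂ) * μ (E.card - 2 * m) := by
  rw [Finset.sum_powerset_apply_card (fun m => if 2*m ≤ E.card then μ (E.card - 2*m) else 0)]
  rw [show Finset.range (E.card / 2 + 1)
      = (Finset.range (E.card + 1)).filter (fun m => 2 * m ≤ E.card) by
    ext m
    simp only [mem_range, mem_filter, Nat.lt_succ_iff]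
    omega]
  rw [sum_filter]
  apply sum_congr rfl
  intro m _
  split_ifs with h
  · simp [nsmul_eq_mul]
  · simp

lemma sum_powerset_by_card {α M : Type*} [DecidableEq α] [AddCommMonoid M]
    (s : Finset α) (F : Finset α → M) :
    ∑ A ∈ s.powerset, F A = ∑ i ∈ Finset.range (s.card + 1), ∑ A ∈ s.powersetCard i, F A := by
  refine Eq.trans ?_ (sum_congr rfl fun i _ =>
    (sum_congr powersetCard_eq_filter.symm fun _ _ => rfl))
  exact (sum_fiberwise_of_maps_to (fun A hA => mem_range.2
    (Nat.lt_succ_of_le (card_le_card (mem_powerset.1 hA)))) _).symm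

theorem stmt4 (n : ℕ) (μ : ℕ → ℂ) (z : Fin n → ℂ) (hz : ∀ i, z i ≠ 0) :
    (∑ j ∈ Finset.range (n + 1), ∑ i ∈ Finset.range (j + 1),
        μ (j - i) * (∑ S ∈ Finset.univ.powersetCard i, ∏ t ∈ S, z t) *
          ∑ S ∈ Finset.univ.powersetCard j, ∏ t ∈ S, z t) =
      (∑ S ∈ Finset.univ.powersetCard n, ∏ t ∈ S, z t) *
        ∑ k ∈ Finset.range (n + 1),
          (∑ j ∈ Finset.range (k / 2 + 1), (Nat.choose k j : ℂ) * μ (k - 2 * j)) *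
            ∑ S ∈ Finset.univ.powersetCard (n - k), ∏ t ∈ S, (z t + (z t)⁻¹) := by
  classical
  set γ : ℕ → ℂ := fun k => ∑ j ∈ Finset.range (k / 2 + 1), (Nat.choose k j : ℂ) * μ (k - 2 * j)
    with hγ
  have hcard : (Finset.univ : Finset (Fin n)).card = n := by simp
  set T2 : Finset ((_ : Finset (Fin n)) × Finset (Fin n)) :=
    Finset.univ.powerset.sigma (fun D => (Finset.univ \ D).powerset) with hT2
  set M : ℂ := ∑ q ∈ T2, γ q.2.card * ((∏ t ∈ q.1, (z t * z t)) * ∏ t ∈ q.2, z t) with hM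
  have hLHS : (∑ j ∈ Finset.range (n + 1), ∑ i ∈ Finset.range (j + 1),
        μ (j - i) * (∑ S ∈ Finset.univ.powersetCard i, ∏ t ∈ S, z t) *
          ∑ S ∈ Finset.univ.powersetCard j, ∏ t ∈ S, z t) = M := by
    set W : Finset (Fin n) → Finset (Fin n) → ℂ := fun A B =>
      (if A.card ≤ B.card then μ (B.card - A.card) else 0) *
        ((∏ t ∈ A, z t) * ∏ t ∈ B, z t) with hW
    have step1 : (∑ j ∈ Finset.range (n + 1), ∑ i ∈ Finset.range (j + 1),
          μ (j - i) * (∑ S ∈ Finset.univ.powersetCard i, ∏ t ∈ S, z t) *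
            ∑ S ∈ Finset.univ.powersetCard j, ∏ t ∈ S, z t)
        = ∑ j ∈ Finset.range (n + 1), ∑ i ∈ Finset.range (n + 1),
            (if i ≤ j then μ (j - i) else 0) *
              (∑ S ∈ Finset.univ.powersetCard i, ∏ t ∈ S, z t) *
            ∑ S ∈ Finset.univ.powersetCard j, ∏ t ∈ S, z t := by
      refine sum_congr rfl fun j hj => ?_
      rw [mem_range] at hj
      refine Eq.trans (sum_congr rfl fun i hi => ?_)
        (sum_subset (range_subset_range.2 (by omega)) fun i _ hi => ?_)
      · rw [mem_range] at hi
        rw [if_pos (by omega)]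
      · rw [mem_range] at hi
        rw [if_neg (by omega), zero_mul, zero_mul]
    have expand : ∀ i ∈ Finset.range (n+1), ∀ j ∈ Finset.range (n+1),
        (if i ≤ j then μ (j - i) else 0) *
            (∑ S ∈ Finset.univ.powersetCard i, ∏ t ∈ S, z t) *
            (∑ S ∈ Finset.univ.powersetCard j, ∏ t ∈ S, z t)
        = ∑ A ∈ Finset.univ.powersetCard i, ∑ B ∈ Finset.univ.powersetCard j, W A B := by
      intro i _ j _
      rw [mul_assoc, sum_mul_sum, mul_sum]
      refine sum_congr rfl fun A hA => ?_
      rw [mul_sum]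
      refine sum_congr rfl fun B hB => ?_
      rw [hW]
      simp only
      rw [(mem_powersetCard.1 hA).2, (mem_powersetCard.1 hB).2]
    have step2 : (∑ j ∈ Finset.range (n + 1), ∑ i ∈ Finset.range (n + 1),
          (if i ≤ j then μ (j - i) else 0) *
            (∑ S ∈ Finset.univ.powersetCard i, ∏ t ∈ S, z t) *
            ∑ S ∈ Finset.univ.powersetCard j, ∏ t ∈ S, z t)
        = ∑ A ∈ (Finset.univ : Finset (Fin n)).powerset,
            ∑ B ∈ (Finset.univ : Finset (Fin n)).powerset, W A B := by
      rw [sum_comm]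
      rw [sum_congr rfl (fun i hi => sum_congr rfl (fun j hj => expand i hi j hj))]
      have h1 : (∑ A ∈ (Finset.univ : Finset (Fin n)).powerset,
            ∑ B ∈ (Finset.univ : Finset (Fin n)).powerset, W A B)
          = ∑ i ∈ Finset.range (n+1), ∑ A ∈ Finset.univ.powersetCard i,
              ∑ B ∈ (Finset.univ : Finset (Fin n)).powerset, W A B := by
        rw [sum_powerset_by_card, hcard]
      rw [h1]
      refine sum_congr rfl fun i _ => ?_
      rw [sum_comm]
      refine sum_congr rfl fun A _ => ?_
      rw [sum_powerset_by_card, hcard]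
    rw [step1, step2]
    rw [sum_sigma' ((Finset.univ : Finset (Fin n)).powerset)
      (fun _ => (Finset.univ : Finset (Fin n)).powerset) (fun A B => W A B)]
    have bij : (∑ p ∈ ((Finset.univ : Finset (Fin n)).powerset.sigma
          (fun _ => (Finset.univ : Finset (Fin n)).powerset)), W p.1 p.2)
        = ∑ q ∈ (Finset.univ : Finset (Fin n)).powerset.sigma
            (fun D => ((Finset.univ \ D).powerset.sigma (fun E => E.powerset))),
            (if 2 * q.2.2.card ≤ q.2.1.card then μ (q.2.1.card - 2 * q.2.2.card) else 0) *
              ((∏ t ∈ q.1, (z t * z t)) * ∏ t ∈ q.2.1, z t) := by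
      refine sum_nbij' (fun p => ⟨p.1 ∩ p.2, ⟨(p.1 \ p.2) ∪ (p.2 \ p.1), p.1 \ p.2⟩⟩)
        (fun q => ⟨q.1 ∪ q.2.2, q.1 ∪ (q.2.1 \ q.2.2)⟩) ?_ ?_ ?_ ?_ ?_
      · rintro ⟨A, B⟩ _
        simp only [mem_sigma, mem_powerset]
        refine ⟨subset_univ _, ?_, subset_union_left⟩
        intro x hx
        simp only [mem_union, mem_sdiff, mem_inter, mem_univ, true_and] at hx ⊢
        tauto
      · rintro ⟨D, E, X⟩ _
        simp only [mem_sigma, mem_powerset]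
        exact ⟨subset_univ _, subset_univ _⟩
      · rintro ⟨A, B⟩ _
        have h1 : (A ∩ B) ∪ (A \ B) = A := by
          ext x; simp only [mem_union, mem_inter, mem_sdiff]; tauto
        have h2 : (A ∩ B) ∪ (((A \ B) ∪ (B \ A)) \ (A \ B)) = B := by
          ext x; simp only [mem_union, mem_inter, mem_sdiff]; tauto
        simp [h1, h2]
      · rintro ⟨D, E, X⟩ hq
        simp only [mem_sigma, mem_powerset] at hq
        obtain ⟨-, hE, hX⟩ := hq
        have hDE : ∀ x, x ∈ E → x ∉ D := by
          intro x hx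
          have := hE hx
          simp only [mem_sdiff, mem_univ, true_and] at this
          exact this
        have hXE : ∀ x, x ∈ X → x ∈ E := fun x hx => hX hx
        have h1 : (D ∪ X) ∩ (D ∪ (E \ X)) = D := by
          ext x
          simp only [mem_union, mem_inter, mem_sdiff]
          have := hDE x; have := hXE x; tauto
        have h2 : ((D ∪ X) \ (D ∪ (E \ X))) ∪ ((D ∪ (E \ X)) \ (D ∪ X)) = E := by
          ext x
          simp only [mem_union, mem_sdiff]
          have := hDE x; have := hXE x; tauto
        have h3 : (D ∪ X) \ (D ∪ (E \ X)) = X := by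
          ext x
          simp only [mem_union, mem_sdiff]
          have := hDE x; have := hXE x; tauto
        have h4 : X ∪ ((D ∪ (E \ X)) \ (D ∪ X)) = E := by
          ext x
          simp only [mem_union, mem_sdiff]
          have := hDE x; have := hXE x; tauto
        simp [h1, h2, h3, h4]
      · rintro ⟨A, B⟩ _
        simp only
        have hA : A.card = (A ∩ B).card + (A \ B).card := by
          rw [card_inter_add_card_sdiff]
        have hB : B.card = (A ∩ B).card + (B \ A).card := by
          rw [inter_comm, card_inter_add_card_sdiff]
        have hE : ((A \ B) ∪ (B \ A)).card = (A \ B).card + (B \ A).card :=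
          card_union_of_disjoint disjoint_sdiff_sdiff
        have hprod : (∏ t ∈ A, z t) * ∏ t ∈ B, z t
            = (∏ t ∈ A ∩ B, (z t * z t)) * ∏ t ∈ (A \ B) ∪ (B \ A), z t := by
          rw [← prod_inter_mul_prod_diff A B z, ← prod_inter_mul_prod_diff B A z,
            inter_comm B A, prod_union disjoint_sdiff_sdiff, prod_mul_distrib]
          ring
        rw [hW]
        simp only
        rw [hprod]
        congr 1
        split_ifs with h1 h2 h2
        · congr 1; omega
        · exfalso; omega
        · exfalso; omega
        · rfl
    rw [bij, hM, hT2]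
    rw [sum_sigma]
    rw [sum_sigma (Finset.univ : Finset (Fin n)).powerset
      (fun D => (Finset.univ \ D).powerset)
      (fun q => γ q.2.card * ((∏ t ∈ q.1, (z t * z t)) * ∏ t ∈ q.2, z t))]
    refine sum_congr rfl fun D _ => ?_
    rw [sum_sigma]
    refine sum_congr rfl fun E _ => ?_
    simp only [hγ]
    rw [← gamma_collapse μ E, sum_mul]
  have hRHS : ((∑ S ∈ Finset.univ.powersetCard n, ∏ t ∈ S, z t) *
        ∑ k ∈ Finset.range (n + 1), γ k *
            ∑ S ∈ Finset.univ.powersetCard (n - k), ∏ t ∈ S, (z t + (z t)⁻¹)) = M := by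
    have hpow : (Finset.univ : Finset (Fin n)).powersetCard n = {Finset.univ} := by
      have h := Finset.powersetCard_self (Finset.univ : Finset (Fin n))
      rwa [hcard] at h
    rw [hpow, sum_singleton, mul_sum]
    have step : ∀ k ∈ Finset.range (n+1),
        (∏ t, z t) * (γ k * ∑ S ∈ Finset.univ.powersetCard (n-k), ∏ t ∈ S, (z t + (z t)⁻¹))
        = ∑ S ∈ Finset.univ.powersetCard (n-k), ∑ T ∈ S.powerset,
            γ k * ((∏ t ∈ T, (z t * z t)) * ∏ t ∈ Finset.univ \ S, z t) := by
      intro k hk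
      rw [mul_left_comm, mul_sum, mul_sum]
      refine sum_congr rfl fun S hS => ?_
      have hSsub : S ⊆ Finset.univ := (mem_powersetCard.1 hS).1
      have key : (∏ t, z t) * ∏ t ∈ S, (z t + (z t)⁻¹)
          = ∑ T ∈ S.powerset, (∏ t ∈ T, (z t * z t)) * ∏ t ∈ Finset.univ \ S, z t := by
        rw [← prod_sdiff hSsub, mul_assoc, ← prod_mul_distrib]
        have h1 : ∀ t ∈ S, z t * (z t + (z t)⁻¹) = z t * z t + 1 := fun t _ => by
          rw [mul_add, mul_inv_cancel₀ (hz t)]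
        rw [prod_congr rfl h1, Finset.prod_add]
        simp only [prod_const_one, mul_one]
        rw [mul_comm, sum_mul]
      rw [key, mul_sum]
    rw [sum_congr rfl step]
    have pack1 : ∀ k, (∑ S ∈ Finset.univ.powersetCard (n-k), ∑ T ∈ S.powerset,
        γ k * ((∏ t ∈ T, (z t * z t)) * ∏ t ∈ Finset.univ \ S, z t))
        = ∑ p ∈ (Finset.univ.powersetCard (n-k)).sigma (fun S => S.powerset),
            γ k * ((∏ t ∈ p.2, (z t * z t)) * ∏ t ∈ Finset.univ \ p.1, z t) := fun k =>
      sum_sigma' _ _ _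
    rw [sum_congr rfl (fun k _ => pack1 k)]
    rw [sum_sigma' (Finset.range (n+1))
      (fun k => (Finset.univ.powersetCard (n-k)).sigma (fun S => S.powerset))
      (fun k p => γ k * ((∏ t ∈ p.2, (z t * z t)) * ∏ t ∈ Finset.univ \ p.1, z t))]
    rw [hM, hT2]
    refine sum_nbij' (fun q => ⟨q.2.2, Finset.univ \ q.2.1⟩)
      (fun p => ⟨p.2.card, ⟨Finset.univ \ p.2, p.1⟩⟩) ?_ ?_ ?_ ?_ ?_
    · rintro ⟨k, S, T⟩ hq
      simp only [mem_sigma, mem_range, mem_powersetCard, mem_powerset] at hq ⊢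
      obtain ⟨hk, ⟨hS, hScard⟩, hT⟩ := hq
      exact ⟨subset_trans hT hS, sdiff_subset_sdiff (subset_refl _) hT⟩
    · rintro ⟨D, E⟩ hp
      simp only [mem_sigma, mem_range, mem_powersetCard, mem_powerset] at hp ⊢
      obtain ⟨hD, hE⟩ := hp
      have hEcard : E.card ≤ n := by
        have := card_le_card (subset_univ E); rw [hcard] at this; exact this
      refine ⟨by omega, ⟨subset_univ _, by rw [card_sdiff_of_subset (subset_univ E), hcard]⟩, ?_⟩
      intro x hxD
      simp only [mem_sdiff, mem_univ, true_and]
      intro hxE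
      have := hE hxE
      simp only [mem_sdiff, mem_univ, true_and] at this
      exact this hxD
    · rintro ⟨k, S, T⟩ hq
      simp only [mem_sigma, mem_range, mem_powersetCard, mem_powerset] at hq
      obtain ⟨hk, ⟨hS, hScard⟩, hT⟩ := hq
      have h1 : Finset.univ \ (Finset.univ \ S) = S := by
        ext x; simp
      have h2 : (Finset.univ \ S).card = k := by
        rw [card_sdiff_of_subset (subset_univ S), hcard, hScard]; omega
      simp [h1, h2]
    · rintro ⟨D, E⟩ hp
      simp only [mem_sigma, mem_range, mem_powersetCard, mem_powerset] at hp
      obtain ⟨hD, hE⟩ := hp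
      have h1 : Finset.univ \ (Finset.univ \ E) = E := by
        ext x; simp
      simp [h1]
    · rintro ⟨k, S, T⟩ hq
      simp only [mem_sigma, mem_range, mem_powersetCard, mem_powerset] at hq
      obtain ⟨hk, ⟨hS, hScard⟩, hT⟩ := hq
      have h2 : (Finset.univ \ S).card = k := by
        rw [card_sdiff_of_subset (subset_univ S), hcard, hScard]; omega
      simp [h2]
  rw [hLHS, ← hRHS]
end

section
/- For i, j, n ∈ ℕ, the product of elementary symmetric polynomials satisfies e_i(z)·e_j(z) = ∑_r binom(i-r+j-r, i-r) σ_{i+j}^r(z), where σ_k^r(z) is the sum of monomials z_1^{α_1}···z_n^{α_n} over α ∈ {0,1,2}^n with ∑α_i = k and exactly r entries equal to 2. -/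
open Finset

/-- `sigmaPoly z k r` is the sum of the monomials `z^α` over `α ∈ {0,1,2}^n` with
`|α| = k` and exactly `r` entries of `α` equal to `2`. -/
def sigmaPoly {R : Type*} [CommRing R] {n : ℕ} (z : Fin n → R) (k r : ℕ) : R :=
  ∑ α ∈ Finset.univ.filter
      (fun α : Fin n → Fin 3 =>
        (∑ i, (α i : ℕ)) = k ∧ (Finset.univ.filter (fun i => (α i : ℕ) = 2)).card = r),
    ∏ i, z i ^ (α i : ℕ)

section Aux
variable {n : ℕ}

def twosF (α : Fin n → Fin 3) : Finset (Fin n) := Finset.univ.filter (fun i => (α i : ℕ) = 2)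
def onesF (α : Fin n → Fin 3) : Finset (Fin n) := Finset.univ.filter (fun i => (α i : ℕ) = 1)

lemma mem_twosF {α : Fin n → Fin 3} {a : Fin n} : a ∈ twosF α ↔ (α a : ℕ) = 2 := by
  simp [twosF]

lemma mem_onesF {α : Fin n → Fin 3} {a : Fin n} : a ∈ onesF α ↔ (α a : ℕ) = 1 := by
  simp [onesF]

lemma sum_val_eq (α : Fin n → Fin 3) :
    (∑ i, (α i : ℕ)) = (onesF α).card + 2 * (twosF α).card := by
  have h : ∀ i : Fin n, (α i : ℕ) =
      (if (α i : ℕ) = 1 then 1 else 0) + (if (α i : ℕ) = 2 then 2 else 0) := by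
    intro i
    have := (α i).is_lt
    split_ifs <;> omega
  rw [Finset.sum_congr rfl fun i _ => h i, Finset.sum_add_distrib,
    ← Finset.sum_filter, ← Finset.sum_filter]
  simp [onesF, twosF, mul_comm]

def pairF (S T : Finset (Fin n)) : Fin n → Fin 3 :=
  fun i => ⟨(if i ∈ S then 1 else 0) + (if i ∈ T then 1 else 0), by split_ifs <;> norm_num⟩

lemma pairF_val (S T : Finset (Fin n)) (i : Fin n) :
    (pairF S T i : ℕ) = (if i ∈ S then 1 else 0) + (if i ∈ T then 1 else 0) := rfl

lemma twosF_pairF (S T : Finset (Fin n)) : twosF (pairF S T) = S ∩ T := by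
  ext a
  simp only [mem_twosF, pairF_val, Finset.mem_inter]
  split_ifs <;> simp_all

lemma onesF_pairF (S T : Finset (Fin n)) : onesF (pairF S T) = (S \ T) ∪ (T \ S) := by
  ext a
  simp only [mem_onesF, pairF_val, Finset.mem_union, Finset.mem_sdiff]
  split_ifs <;> simp_all

lemma sum_pairF (S T : Finset (Fin n)) :
    (∑ i, (pairF S T i : ℕ)) = S.card + T.card := by
  simp only [pairF_val, Finset.sum_add_distrib]
  simp [Finset.sum_ite_mem]

variable {R : Type*} [CommRing R]

lemma prod_ind (S : Finset (Fin n)) (z : Fin n → R) :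
    (∏ i, z i ^ (if i ∈ S then 1 else 0)) = ∏ t ∈ S, z t := by
  rw [show (∏ i, z i ^ (if i ∈ S then 1 else 0)) = ∏ i, (if i ∈ S then z i else 1) from
    Finset.prod_congr rfl fun i _ => by split_ifs <;> simp]
  rw [Finset.prod_ite_mem, Finset.univ_inter]

lemma prod_pairF (S T : Finset (Fin n)) (z : Fin n → R) :
    (∏ t ∈ S, z t) * ∏ t ∈ T, z t = ∏ i, z i ^ (pairF S T i : ℕ) := by
  simp only [pairF_val, pow_add, Finset.prod_mul_distrib, prod_ind]

end Aux

theorem stmt5 {R : Type*} [CommRing R] (n : ℕ) (z : Fin n → R) (i j : ℕ) :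
    (∑ S ∈ Finset.univ.powersetCard i, ∏ t ∈ S, z t) *
        (∑ S ∈ Finset.univ.powersetCard j, ∏ t ∈ S, z t) =
      ∑ r ∈ Finset.range (min i j + 1),
        (Nat.choose ((i - r) + (j - r)) (i - r) : R) * sigmaPoly z (i + j) r := by
  classical
  rw [Finset.sum_mul_sum, ← Finset.sum_product']
  have hRHS : ∀ r ∈ Finset.range (min i j + 1),
      (Nat.choose ((i - r) + (j - r)) (i - r) : R) * sigmaPoly z (i + j) r
      = ∑ α ∈ Finset.univ.filter
          (fun α : Fin n → Fin 3 =>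
            (∑ t, (α t : ℕ)) = i + j ∧ (twosF α).card = r),
          ∑ _X ∈ (onesF α).powersetCard (i - r), ∏ t, z t ^ (α t : ℕ) := by
    intro r hr
    rw [Finset.mem_range] at hr
    rw [sigmaPoly, Finset.mul_sum]
    refine Finset.sum_congr rfl fun α hα => ?_
    rw [Finset.mem_filter] at hα
    obtain ⟨-, hsum, hcard⟩ := hα
    have hones : (onesF α).card = (i - r) + (j - r) := by
      have := sum_val_eq α
      rw [hsum] at this
      omega
    rw [Finset.sum_const, Finset.card_powersetCard, hones, nsmul_eq_mul]
  rw [Finset.sum_congr rfl hRHS]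
  have step1 : ∀ r ∈ Finset.range (min i j + 1),
      (∑ α ∈ (fun r => Finset.univ.filter
      (fun α : Fin n → Fin 3 =>
        (∑ t, (α t : ℕ)) = i + j ∧ (twosF α).card = r)) r,
        ∑ _X ∈ (onesF α).powersetCard (i - r), ∏ t, z t ^ (α t : ℕ))
      = Finset.sum (((fun r => Finset.univ.filter
      (fun α : Fin n → Fin 3 =>
        (∑ t, (α t : ℕ)) = i + j ∧ (twosF α).card = r)) r).sigma (fun α => (onesF α).powersetCard (i - r)))
          (fun p => ∏ t, z t ^ (p.1 t : ℕ)) :=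
    fun r _ => (Finset.sum_sigma _ _
      (fun p : Σ _α : Fin n → Fin 3, Finset (Fin n) => ∏ t, z t ^ (p.1 t : ℕ))).symm
  rw [Finset.sum_congr rfl step1]
  rw [← Finset.sum_sigma (Finset.range (min i j + 1))
    (fun r => ((fun r => Finset.univ.filter
      (fun α : Fin n → Fin 3 =>
        (∑ t, (α t : ℕ)) = i + j ∧ (twosF α).card = r)) r).sigma (fun α => (onesF α).powersetCard (i - r)))
    (fun q => ∏ t, z t ^ (q.2.1 t : ℕ))]
  refine Finset.sum_nbij'
    (fun p => ⟨(p.1 ∩ p.2).card, pairF p.1 p.2, p.1 \ p.2⟩)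
    (fun q => (twosF q.2.1 ∪ q.2.2, twosF q.2.1 ∪ (onesF q.2.1 \ q.2.2)))
    ?_ ?_ ?_ ?_ ?_
  · rintro ⟨S, T⟩ hp
    rw [Finset.mem_product, Finset.mem_powersetCard_univ, Finset.mem_powersetCard_univ] at hp
    obtain ⟨hS, hT⟩ := hp
    simp only at hS hT
    have hri : (S ∩ T).card ≤ i := hS ▸ Finset.card_le_card Finset.inter_subset_left
    have hrj : (S ∩ T).card ≤ j := hT ▸ Finset.card_le_card Finset.inter_subset_right
    simp only [Finset.mem_sigma, Finset.mem_range, Finset.mem_filter,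
      Finset.mem_powersetCard, Finset.mem_univ, true_and]
    refine ⟨?_, ⟨?_, ?_⟩, ?_, ?_⟩
    · omega
    · rw [sum_pairF, hS, hT]
    · rw [twosF_pairF]
    · rw [onesF_pairF]
      exact fun a ha => Finset.mem_union_left _ ha
    · have := Finset.card_inter_add_card_sdiff S T
      omega
  · rintro ⟨r, α, X⟩ hq
    simp only [Finset.mem_sigma, Finset.mem_range, Finset.mem_filter,
      Finset.mem_powersetCard, Finset.mem_univ, true_and] at hq
    obtain ⟨hr, ⟨hsum, hcard⟩, hXsub, hXcard⟩ := hq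
    have hones : (onesF α).card = i + j - 2 * r := by
      have := sum_val_eq α; omega
    have hdis : Disjoint (twosF α) (onesF α) := by
      rw [Finset.disjoint_left]
      intro a ha ha'
      rw [mem_twosF] at ha; rw [mem_onesF] at ha'; omega
    rw [Finset.mem_product, Finset.mem_powersetCard_univ, Finset.mem_powersetCard_univ]
    constructor
    · rw [Finset.card_union_of_disjoint (hdis.mono_right hXsub), hcard, hXcard]
      omega
    · rw [Finset.card_union_of_disjoint (hdis.mono_right (Finset.sdiff_subset)),
        Finset.card_sdiff_of_subset hXsub, hcard, hXcard, hones]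
      omega
  · rintro ⟨S, T⟩ hp
    dsimp only
    simp only [twosF_pairF, onesF_pairF]
    ext a
    · simp only [Finset.mem_union, Finset.mem_inter, Finset.mem_sdiff]
      tauto
    · simp only [Finset.mem_union, Finset.mem_inter, Finset.mem_sdiff]
      tauto
  · rintro ⟨r, α, X⟩ hq
    dsimp only
    simp only [Finset.mem_sigma, Finset.mem_range, Finset.mem_filter,
      Finset.mem_powersetCard, Finset.mem_univ, true_and] at hq
    obtain ⟨hr, ⟨hsum, hcard⟩, hXsub, hXcard⟩ := hq
    have hX1 : ∀ a ∈ X, (α a : ℕ) = 1 := fun a ha => mem_onesF.mp (hXsub ha)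
    have hST : (twosF α ∪ X) ∩ (twosF α ∪ (onesF α \ X)) = twosF α := by
      ext a
      simp only [Finset.mem_inter, Finset.mem_union, Finset.mem_sdiff]
      constructor
      · rintro ⟨h1 | h1, h2 | h2⟩ <;> first | assumption | (exfalso; tauto)
      · exact fun h => ⟨Or.inl h, Or.inl h⟩
    have h1 : ((twosF α ∪ X) ∩ (twosF α ∪ (onesF α \ X))).card = r := by rw [hST, hcard]
    have h2 : pairF (twosF α ∪ X) (twosF α ∪ (onesF α \ X)) = α := by
      funext a
      apply Fin.val_injective
      rw [pairF_val]
      have hlt : (α a : ℕ) < 3 := (α a).is_lt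
      by_cases hx : a ∈ X
      · have hv := hX1 a hx
        rw [if_pos (Finset.mem_union_right _ hx), if_neg]
        · omega
        · rw [Finset.mem_union, Finset.mem_sdiff, mem_twosF, mem_onesF]
          push_neg
          exact ⟨by omega, fun _ => hx⟩
      · by_cases h2v : (α a : ℕ) = 2
        · rw [if_pos (Finset.mem_union_left _ (mem_twosF.mpr h2v)),
            if_pos (Finset.mem_union_left _ (mem_twosF.mpr h2v))]
          omega
        · by_cases h1v : (α a : ℕ) = 1
          · rw [if_neg, if_pos]
            · omega
            · exact Finset.mem_union_right _ (Finset.mem_sdiff.mpr ⟨mem_onesF.mpr h1v, hx⟩)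
            · rw [Finset.mem_union, mem_twosF]
              push_neg
              exact ⟨by omega, hx⟩
          · rw [if_neg, if_neg]
            · omega
            · rw [Finset.mem_union, Finset.mem_sdiff, mem_twosF, mem_onesF]
              push_neg
              exact ⟨by omega, fun h => absurd h h1v⟩
            · rw [Finset.mem_union, mem_twosF]
              push_neg
              exact ⟨by omega, hx⟩
    have h3 : (twosF α ∪ X) \ (twosF α ∪ (onesF α \ X)) = X := by
      ext a
      simp only [Finset.mem_sdiff, Finset.mem_union, not_or, Finset.mem_sdiff, not_and, not_not]
      constructor
      · rintro ⟨h1 | h1, h2, h3⟩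
        · exact absurd h1 h2
        · exact h1
      · intro hx
        have hv := hX1 a hx
        have h2 : a ∉ twosF α := fun h => by rw [mem_twosF] at h; omega
        exact ⟨Or.inr hx, h2, fun _ => hx⟩
    rw [h1, h2, h3]
  · rintro ⟨S, T⟩ hp
    exact prod_pairF S T z
end

section
/- For every n ∈ ℕ, the identity ∑_{k=0}^{⌊n/2⌋} C_k · binom(n, 2k) · z^k (1+z)^{n-2k} = ∑_{k=0}^n (1/(n+1)) binom(n+1, k) binom(n+1, k+1) z^k holds as polynomials in z, where C_k is the k-th Catalan number. -/
/-!
Comparing coefficients of `z ^ m`, the left side contributes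
`∑ₖ Cₖ (n choose 2k) (n - 2k choose m - k)`. Multiplied by `m + 1`, each summand becomes
`(n choose m) (n - m choose k) (m + 1 choose k + 1)` by rearranging products of binomial
coefficients, and Vandermonde's identity sums these to `(n choose m) (n + 1 choose m)`, which is
`(m + 1)` times the Narayana number `(n + 1 choose m) (n + 1 choose m + 1) / (n + 1)`.
-/

open Polynomial Finset

namespace Nat

theorem succ_mul_catalan_mul_choose_mul_choose {n m k : ℕ} (hk : k ≤ m) :
    (m + 1) * (catalan k * n.choose (2 * k) * (n - 2 * k).choose (m - k)) =
      n.choose m * ((n - m).choose k * (m + 1).choose (k + 1)) := by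
  rcases le_or_gt (m + k) n with hmk | hmk
  · apply Nat.eq_of_mul_eq_mul_left k.succ_pos
    calc (k + 1) * ((m + 1) * (catalan k * n.choose (2 * k) * (n - 2 * k).choose (m - k)))
        = (m + 1) * ((k + 1) * catalan k) * (n.choose (2 * k) * (n - 2 * k).choose (m - k)) := by
          ring
      _ = (m + 1) * (2 * k).choose k * (n.choose (m + k) * (m + k).choose (2 * k)) := by
          rw [succ_mul_catalan_eq_centralBinom, centralBinom_eq_two_mul_choose,
            choose_mul (by omega), show m + k - 2 * k = m - k by omega]
      _ = (m + 1) * n.choose (m + k) * ((m + k).choose (2 * k) * (2 * k).choose k) := by ring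
      _ = (m + 1) * n.choose (m + k) * ((m + k).choose m * m.choose k) := by
          rw [choose_mul (by omega), show m + k - k = m by omega, show 2 * k - k = k by omega,
            show (m + k).choose k = (m + k).choose m from choose_symm_add.symm]
      _ = (m + 1) * m.choose k * (n.choose (m + k) * (m + k).choose m) := by ring
      _ = (m + 1).choose (k + 1) * (k + 1) * (n.choose m * (n - m).choose k) := by
          rw [add_one_mul_choose_eq, choose_mul (by omega), show m + k - m = k by omega]
      _ = (k + 1) * (n.choose m * ((n - m).choose k * (m + 1).choose (k + 1))) := by ring
  · have hleft : n.choose (2 * k) * (n - 2 * k).choose (m - k) = 0 := by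
      rcases le_or_gt (2 * k) n with h2k | h2k
      · rw [choose_eq_zero_of_lt (n := n - 2 * k) (k := m - k) (by omega), mul_zero]
      · rw [choose_eq_zero_of_lt h2k, zero_mul]
    have hright : n.choose m * (n - m).choose k = 0 := by
      rcases le_or_gt m n with hm | hm
      · rw [choose_eq_zero_of_lt (n := n - m) (k := k) (by omega), mul_zero]
      · rw [choose_eq_zero_of_lt hm, zero_mul]
    rw [mul_assoc (catalan k), hleft, ← mul_assoc (n.choose m), hright]
    simp

theorem sum_choose_mul_choose_succ {n m : ℕ} (hm : m ≤ n) :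
    ∑ k ∈ range (m + 1), (n - m).choose k * (m + 1).choose (k + 1) = (n + 1).choose m := by
  rw [show n + 1 = n - m + (m + 1) by omega, add_choose_eq,
    Finset.Nat.sum_antidiagonal_eq_sum_range_succ fun i j => (n - m).choose i * (m + 1).choose j]
  refine sum_congr rfl fun k hk => ?_
  rw [choose_symm_of_eq_add (a := k + 1) (b := m - k) (by have := mem_range.mp hk; omega)]

theorem succ_mul_sum_catalan_mul_choose_mul_choose (n m : ℕ) :
    (m + 1) * ∑ k ∈ range (m + 1), catalan k * n.choose (2 * k) * (n - 2 * k).choose (m - k) =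
      n.choose m * (n + 1).choose m := by
  rw [mul_sum, sum_congr rfl fun k hk =>
    succ_mul_catalan_mul_choose_mul_choose (Nat.lt_succ_iff.mp (mem_range.mp hk)), ← mul_sum]
  rcases le_or_gt m n with hm | hm
  · rw [sum_choose_mul_choose_succ hm]
  · simp [choose_eq_zero_of_lt hm]

theorem sum_catalan_mul_choose_mul_choose_mul_succ (n m : ℕ) :
    (∑ k ∈ range (m + 1), catalan k * n.choose (2 * k) * (n - 2 * k).choose (m - k)) * (n + 1) =
      (n + 1).choose m * (n + 1).choose (m + 1) := by
  apply Nat.eq_of_mul_eq_mul_left m.succ_pos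
  calc (m + 1) * ((∑ k ∈ range (m + 1),
          catalan k * n.choose (2 * k) * (n - 2 * k).choose (m - k)) * (n + 1))
      = (n + 1) * ((m + 1) * ∑ k ∈ range (m + 1),
          catalan k * n.choose (2 * k) * (n - 2 * k).choose (m - k)) := by ring
    _ = (n + 1) * n.choose m * (n + 1).choose m := by
        rw [succ_mul_sum_catalan_mul_choose_mul_choose, mul_assoc]
    _ = (m + 1) * ((n + 1).choose m * (n + 1).choose (m + 1)) := by
        rw [add_one_mul_choose_eq]; ring

end Nat

theorem coeff_sum_catalan_mul_choose_mul_X_pow_mul_one_add_X_pow (n m : ℕ) :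
    (∑ k ∈ range (n / 2 + 1),
        C ((catalan k : ℚ) * n.choose (2 * k)) * X ^ k * (1 + X) ^ (n - 2 * k)).coeff m =
      ((∑ k ∈ range (m + 1), catalan k * n.choose (2 * k) * (n - 2 * k).choose (m - k) : ℕ) : ℚ) := by
  simp only [finsetSum_coeff, mul_right_comm _ (X ^ _), coeff_mul_X_pow', coeff_C_mul,
    coeff_one_add_X_pow, ← sum_filter]
  push_cast
  -- summands with `k > n / 2` vanish because `n.choose (2 * k) = 0`
  refine sum_subset (fun k hk => ?_) (fun k hk hk' => ?_)
  · simp only [mem_filter, mem_range] at hk ⊢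
    omega
  · have h2k : n < 2 * k := by simp only [mem_filter, mem_range, not_and] at hk hk'; omega
    simp [Nat.choose_eq_zero_of_lt h2k]

theorem stmt6 (n : ℕ) :
    (∑ k ∈ Finset.range (n / 2 + 1),
        Polynomial.C ((catalan k : ℚ) * (Nat.choose n (2 * k) : ℚ)) *
          Polynomial.X ^ k * (1 + Polynomial.X) ^ (n - 2 * k)) =
      ∑ k ∈ Finset.range (n + 1),
        Polynomial.C ((1 / (n + 1) : ℚ) *
            (Nat.choose (n + 1) k : ℚ) * (Nat.choose (n + 1) (k + 1) : ℚ)) *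
          Polynomial.X ^ k := by
  ext m
  have hnarayana := Nat.sum_catalan_mul_choose_mul_choose_mul_succ n m
  rw [coeff_sum_catalan_mul_choose_mul_X_pow_mul_one_add_X_pow, finsetSum_coeff]
  simp only [coeff_C_mul_X_pow, sum_ite_eq, mem_range]
  split_ifs with hm
  · field_simp
    exact_mod_cast hnarayana
  · rw [Nat.choose_eq_zero_of_lt (by omega : n + 1 < m + 1), mul_zero] at hnarayana
    exact_mod_cast (Nat.mul_eq_zero.mp hnarayana).resolve_right n.succ_ne_zero
end

section
/- For every n ∈ ℕ and 0 ≤ k ≤ n, binom(n,k)^2 - binom(n,k-1)·binom(n,k+1) = (1/(n+1))·binom(n+1,k)·binom(n+1,k+1). -/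
theorem stmt7 (n k : ℕ) (hk : k ≤ n) :
    (Nat.choose n k : ℚ) ^ 2 -
        (if k = 0 then 0 else (Nat.choose n (k - 1) : ℚ)) * (Nat.choose n (k + 1) : ℚ) =
      (Nat.choose (n + 1) k : ℚ) * (Nat.choose (n + 1) (k + 1) : ℚ) / (n + 1) := by
  rcases Nat.eq_zero_or_pos k with hk0 | hk0
  · subst hk0
    simp [Nat.choose_one_right]
    rw [div_self (by positivity)]
  rcases eq_or_lt_of_le hk with rfl | hkn
  · simp [Nat.choose_succ_self, Nat.choose_succ_self_right, Nat.choose_self]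
    rw [div_self (by positivity)]
  · obtain ⟨j, rfl⟩ : ∃ j, k = j + 1 := ⟨k - 1, by omega⟩
    obtain ⟨m, rfl⟩ : ∃ m, n = j + m + 2 := ⟨n - j - 2, by omega⟩
    rw [if_neg (by omega)]
    have e1 : j + 1 - 1 = j := rfl
    rw [e1, Nat.cast_choose ℚ (by omega : j+1 ≤ j+m+2),
      Nat.cast_choose ℚ (by omega : j ≤ j+m+2),
      Nat.cast_choose ℚ (by omega : j+1+1 ≤ j+m+2),
      Nat.cast_choose ℚ (by omega : j+1 ≤ j+m+2+1),
      Nat.cast_choose ℚ (by omega : j+1+1 ≤ j+m+2+1)]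
    have e2 : j + m + 2 - (j+1) = m + 1 := by omega
    have e3 : j + m + 2 - j = m + 2 := by omega
    have e4 : j + m + 2 - (j+1+1) = m := by omega
    have e5 : j + m + 2 + 1 - (j+1) = m + 2 := by omega
    have e6 : j + m + 2 + 1 - (j+1+1) = m + 1 := by omega
    rw [e2, e3, e4, e5, e6]
    have f1 : ((j+1+1).factorial : ℚ) = (j+2) * (j+1) * (j.factorial : ℚ) := by
      push_cast [Nat.factorial_succ]; ring
    have f2 : ((j+1).factorial : ℚ) = (j+1) * (j.factorial : ℚ) := by
      push_cast [Nat.factorial_succ]; ring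
    have f3 : ((m+2).factorial : ℚ) = (m+2) * (m+1) * (m.factorial : ℚ) := by
      push_cast [Nat.factorial_succ]; ring
    have f4 : ((m+1).factorial : ℚ) = (m+1) * (m.factorial : ℚ) := by
      push_cast [Nat.factorial_succ]; ring
    have f5 : ((j+m+2+1).factorial : ℚ) = (j+m+3) * ((j+m+2).factorial : ℚ) := by
      push_cast [Nat.factorial_succ]; ring
    rw [f1, f2, f3, f4, f5]
    have hj : (j.factorial : ℚ) ≠ 0 := by positivity
    have hm : (m.factorial : ℚ) ≠ 0 := by positivity
    have hn : ((j+m+2).factorial : ℚ) ≠ 0 := by positivity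
    push_cast
    field_simp
    ring
end

section
/- For every n ≥ 1, the Narayana polynomial ∑_{k=0}^{n-1} (1/n)·binom(n,k)·binom(n,k+1)·z^k has only real and negative zeros. -/
/-!
After the substitution `t = (z + 1) / (z - 1)` the Narayana polynomial becomes a multiple of
`F = D^(n-1) ((X + 1)^n (X - 1)^n)`: by Leibniz' rule,
`(z - 1)^(n+1) F(t) = (n-1)! 2^(n+1) z ∑ₖ C(n,k) C(n,k+1) z^k`.
The polynomial `(X + 1)^n (X - 1)^n` has all its `2n` roots real, and by Rolle's theorem each
derivative loses at most one real root, so `F`, of degree `n + 1`, splits over `ℝ`. Hence a root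
`z` of the Narayana polynomial gives a real `t`, so `z = (t + 1) / (t - 1)` is real, and it is
negative because all coefficients are positive.
-/

open Polynomial Finset
open scoped Nat

theorem Nat.choose_mul_descFactorial_mul_descFactorial {m k : ℕ} (hk : k ≤ m) :
    m.choose k * ((m + 1).descFactorial (m - k) * (m + 1).descFactorial k) =
      m ! * ((m + 1).choose k * (m + 1).choose (k + 1)) := by
  have hsymm : (m + 1).choose (m - k) = (m + 1).choose (k + 1) := by
    rw [← Nat.choose_symm (by omega : k + 1 ≤ m + 1)]; congr 1; omega
  rw [Nat.descFactorial_eq_factorial_mul_choose, Nat.descFactorial_eq_factorial_mul_choose, hsymm,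
    ← Nat.choose_mul_factorial_mul_factorial hk]
  ring

theorem eq_add_one_div_sub_one_of_add_one_div_sub_one_eq {K : Type*} [Field K] [NeZero (2 : K)]
    {z w : K} (hz : z ≠ 1) (h : (z + 1) / (z - 1) = w) : z = (w + 1) / (w - 1) := by
  have hz' : z - 1 ≠ 0 := sub_ne_zero.mpr hz
  rw [← h, div_add_one hz', div_sub_one hz', div_div_div_cancel_right₀ hz',
    show z + 1 - (z - 1) = 2 by ring, show z + 1 + (z - 1) = 2 * z by ring,
    mul_div_cancel_left₀ z two_ne_zero]

theorem narayana_sum_pos {R : Type*} [Semiring R] [PartialOrder R] [IsStrictOrderedRing R]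
    (m : ℕ) {r : R} (hr : 0 ≤ r) :
    0 < ∑ k ∈ range (m + 1), ((m + 1).choose k * (m + 1).choose (k + 1) : R) * r ^ k := by
  refine sum_pos' (fun k _ => by positivity) ⟨0, by simp, ?_⟩
  simp only [Nat.choose_zero_right, zero_add, Nat.choose_one_right, pow_zero]
  positivity

namespace Polynomial

theorem Splits.derivative_real {p : ℝ[X]} (hp : p.Splits) : p.derivative.Splits := by
  rw [splits_iff_card_roots] at hp ⊢
  have := card_roots_le_derivative p
  have := card_roots' p.derivative
  have := natDegree_derivative_le p
  omega

theorem Splits.iterate_derivative_real {p : ℝ[X]} (hp : p.Splits) (k : ℕ) :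
    (derivative^[k] p).Splits := by
  induction k with
  | zero => exact hp
  | succ k ih => rw [Function.iterate_succ_apply']; exact ih.derivative_real

theorem iterate_derivative_X_sub_C_pow_mul_X_sub_C_pow {R : Type*} [CommRing R] (m : ℕ) (a b : R) :
    derivative^[m] ((X - C a) ^ (m + 1) * (X - C b) ^ (m + 1)) =
      ∑ k ∈ range (m + 1), (m ! * ((m + 1).choose k * (m + 1).choose (k + 1))) •
        ((X - C a) ^ (k + 1) * (X - C b) ^ (m + 1 - k)) := by
  rw [iterate_derivative_mul]
  refine sum_congr rfl fun k hk => ?_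
  have hk : k ≤ m := Nat.lt_succ_iff.mp (mem_range.mp hk)
  rw [iterate_derivative_X_sub_pow, iterate_derivative_X_sub_pow, smul_mul_smul_comm, smul_smul,
    Nat.choose_mul_descFactorial_mul_descFactorial hk, show m + 1 - (m - k) = k + 1 by omega]

theorem sub_one_pow_mul_eval_iterate_derivative {K : Type*} [Field K] {z : K} (hz : z ≠ 1)
    (m : ℕ) :
    (z - 1) ^ (m + 2) *
        eval ((z + 1) / (z - 1)) (derivative^[m] ((X - C (-1)) ^ (m + 1) * (X - C 1) ^ (m + 1))) =
      m ! * 2 ^ (m + 2) * z *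
        ∑ k ∈ range (m + 1), ((m + 1).choose k * (m + 1).choose (k + 1) : K) * z ^ k := by
  set t := (z + 1) / (z - 1)
  have hz' : z - 1 ≠ 0 := sub_ne_zero.mpr hz
  have ht_add : (z - 1) * (t + 1) = 2 * z := by simp only [t]; field_simp; ring
  have ht_sub : (z - 1) * (t - 1) = 2 := by simp only [t]; field_simp; ring
  rw [iterate_derivative_X_sub_C_pow_mul_X_sub_C_pow, eval_finsetSum, mul_sum, mul_sum]
  refine sum_congr rfl fun k hk => ?_
  have hk : k ≤ m := Nat.lt_succ_iff.mp (mem_range.mp hk)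
  have hsplit : (z - 1) ^ (m + 2) = (z - 1) ^ (k + 1) * (z - 1) ^ (m + 1 - k) := by
    rw [← pow_add]; congr 1; omega
  have htwo : (2 : K) ^ (m + 2) = 2 ^ (k + 1) * 2 ^ (m + 1 - k) := by
    rw [← pow_add]; congr 1; omega
  simp only [nsmul_eq_mul, eval_mul, eval_natCast, eval_pow, eval_sub, eval_X, eval_C,
    sub_neg_eq_add]
  calc (z - 1) ^ (m + 2) * (↑(m ! * ((m + 1).choose k * (m + 1).choose (k + 1))) *
        ((t + 1) ^ (k + 1) * (t - 1) ^ (m + 1 - k)))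
      = ↑(m ! * ((m + 1).choose k * (m + 1).choose (k + 1))) *
          (((z - 1) * (t + 1)) ^ (k + 1) * ((z - 1) * (t - 1)) ^ (m + 1 - k)) := by
        rw [hsplit, mul_pow, mul_pow]; ring
    _ = _ := by rw [ht_add, ht_sub, htwo]; push_cast; ring

theorem iterate_derivative_X_add_one_pow_mul_X_sub_one_pow_ne_zero (m : ℕ) :
    derivative^[m] ((X - C (-1)) ^ (m + 1) * (X - C 1) ^ (m + 1) : ℝ[X]) ≠ 0 := by
  intro h
  have h2 := sub_one_pow_mul_eval_iterate_derivative (by norm_num : (2 : ℝ) ≠ 1) m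
  rw [h, eval_zero, mul_zero] at h2
  have := mul_pos (by positivity : (0 : ℝ) < m ! * 2 ^ (m + 2) * 2) (narayana_sum_pos m zero_le_two)
  linarith

end Polynomial

theorem stmt8 (n : ℕ) (hn : 1 ≤ n) :
    ∀ z : ℂ,
      ((∑ k ∈ Finset.range n,
          Polynomial.C ((1 / n : ℝ) * (Nat.choose n k : ℝ) * (Nat.choose n (k + 1) : ℝ)) *
            Polynomial.X ^ k).map (algebraMap ℝ ℂ)).eval z = 0 →
      ∃ x : ℝ, x < 0 ∧ z = (x : ℂ) := by
  obtain ⟨m, rfl⟩ : ∃ m, n = m + 1 := ⟨n - 1, by omega⟩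
  intro z hz
  have hN : ∑ k ∈ range (m + 1), ((m + 1).choose k * (m + 1).choose (k + 1) : ℂ) * z ^ k = 0 := by
    simp only [Polynomial.map_sum, Polynomial.map_mul, map_C, Polynomial.map_pow, map_X,
      eval_finsetSum, eval_mul, eval_C, eval_pow, eval_X, Complex.coe_algebraMap] at hz
    push_cast at hz
    simp only [mul_assoc, ← mul_sum, mul_eq_zero, one_div, inv_eq_zero] at hz
    simpa only [mul_assoc] using hz.resolve_left (Nat.cast_add_one_ne_zero m)
  have hN_ne {r : ℝ} (hr : 0 ≤ r) :
      ∑ k ∈ range (m + 1), ((m + 1).choose k * (m + 1).choose (k + 1) : ℂ) * (r : ℂ) ^ k ≠ 0 := by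
    exact_mod_cast (narayana_sum_pos m hr).ne'
  have hz1 : z ≠ 1 := by
    rintro rfl
    exact hN_ne zero_le_one (by simpa using hN)
  set F : ℝ[X] := derivative^[m] ((X - C (-1)) ^ (m + 1) * (X - C 1) ^ (m + 1))
  have hF : F.Splits :=
    (((Splits.X_sub_C _).pow _).mul ((Splits.X_sub_C _).pow _)).iterate_derivative_real m
  have hroot : (F.map (algebraMap ℝ ℂ)).IsRoot ((z + 1) / (z - 1)) := by
    have h := sub_one_pow_mul_eval_iterate_derivative hz1 m
    rw [hN, mul_zero] at h
    rw [IsRoot.def, ← iterate_derivative_map]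
    simpa [F] using (mul_eq_zero.mp h).resolve_left (pow_ne_zero _ (sub_ne_zero.mpr hz1))
  obtain ⟨t, ht⟩ :=
    hF.mem_range_of_isRoot (iterate_derivative_X_add_one_pow_mul_X_sub_one_pow_ne_zero m) hroot
  have hzt : z = ((t + 1) / (t - 1) : ℝ) := by
    push_cast
    exact eq_add_one_div_sub_one_of_add_one_div_sub_one_eq hz1 ht.symm
  refine ⟨(t + 1) / (t - 1), ?_, hzt⟩
  by_contra! ht_nonneg
  exact hN_ne ht_nonneg (hzt ▸ hN)
end

section
/- Let P(z) = P^E(z^2) + z·P^O(z^2) be a real polynomial, where P^E and P^O collect the even- and odd-index coefficients. If P is nonzero at every z with Re(z) > 0, all nonzero coefficients of P have the same sign, and both P^E and P^O are not identically zero, then both P^E and P^O have only real non-positive zeros. -/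
open Polynomial Finset

/-- The even part `P^E` of a real polynomial: `P^E(z) = ∑ a_{2k} z^k`. -/
noncomputable def evenPart (P : Polynomial ℝ) : Polynomial ℝ :=
  ∑ k ∈ Finset.range (P.natDegree + 1), Polynomial.C (P.coeff (2 * k)) * Polynomial.X ^ k

/-- The odd part `P^O` of a real polynomial: `P^O(z) = ∑ a_{2k+1} z^k`. -/
noncomputable def oddPart (P : Polynomial ℝ) : Polynomial ℝ :=
  ∑ k ∈ Finset.range (P.natDegree + 1), Polynomial.C (P.coeff (2 * k + 1)) * Polynomial.X ^ k

open ComplexConjugate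
open scoped ComplexOrder

/-! If `P` has no zeros in the open right half-plane, its roots lie in the closed left half-plane,
so for `Re z > 0` reflecting `z` in the imaginary axis cannot increase `|P|`:
`|P(-z)| = |P(-z̄)| ≤ |P(z)|`, with equality only if every root is purely imaginary, and then `P`
is even or odd. But if `w ∉ (-∞, 0]` were a zero of `P^E` (resp. `P^O`), its square root `s` with
`Re s > 0` would give `P(±s) = ±s P^O(w)` (resp. `P^E(w)`), hence `|P(-s)| = |P(s)|`. -/

theorem Finset.sum_range_two_mul {M : Type*} [AddCommMonoid M] (m : ℕ) (f : ℕ → M) :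
    ∑ j ∈ range (2 * m), f j = ∑ k ∈ range m, (f (2 * k) + f (2 * k + 1)) := by
  induction m with
  | zero => simp
  | succ m ih =>
    rw [Nat.mul_succ, Finset.sum_range_succ, Finset.sum_range_succ, ih, Finset.sum_range_succ,
      add_assoc]

namespace Complex

lemma norm_neg_conj_sub_le {z r : ℂ} (hz : 0 < z.re) (hr : r.re ≤ 0) :
    ‖-conj z - r‖ ≤ ‖z - r‖ := by
  rw [norm_def, norm_def]
  apply Real.sqrt_le_sqrt
  simp only [normSq_apply, sub_re, sub_im, neg_re, neg_im, conj_re, conj_im]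
  nlinarith [mul_nonneg hz.le (neg_nonneg.2 hr)]

lemma norm_neg_conj_sub_lt {z r : ℂ} (hz : 0 < z.re) (hr : r.re < 0) :
    ‖-conj z - r‖ < ‖z - r‖ := by
  rw [norm_def, norm_def]
  apply Real.sqrt_lt_sqrt (normSq_nonneg _)
  simp only [normSq_apply, sub_re, sub_im, neg_re, neg_im, conj_re, conj_im]
  nlinarith [mul_pos hz (neg_pos.2 hr)]

lemma exists_sq_eq_and_re_pos {w : ℂ} (hw : ¬ w ≤ 0) : ∃ s : ℂ, s ^ 2 = w ∧ 0 < s.re := by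
  refine ⟨w ^ (2⁻¹ : ℂ), cpow_ofNat_inv_pow w 2, ?_⟩
  have hne : -w.re ≠ ‖w‖ := mt neg_re_eq_norm.1 hw
  have hle : -w.re ≤ ‖w‖ := (neg_le_abs w.re).trans (abs_re_le_norm w)
  rw [cpow_inv_two_re]
  exact Real.sqrt_pos.2 (by linarith [lt_of_le_of_ne hle hne])

end Complex

lemma eval_map_eq_evenPart_add_oddPart (P : ℝ[X]) (z : ℂ) :
    (P.map (algebraMap ℝ ℂ)).eval z =
      ((evenPart P).map (algebraMap ℝ ℂ)).eval (z ^ 2) +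
        z * ((oddPart P).map (algebraMap ℝ ℂ)).eval (z ^ 2) := by
  have hdeg : (P.map (algebraMap ℝ ℂ)).natDegree < 2 * (P.natDegree + 1) :=
    natDegree_map_le.trans_lt (by omega)
  rw [eval_eq_sum_range' hdeg, Finset.sum_range_two_mul]
  simp only [coeff_map, evenPart, oddPart, Polynomial.map_sum, Polynomial.map_mul, map_C,
    Polynomial.map_pow, map_X, eval_finsetSum, eval_mul, eval_C, eval_pow, eval_X,
    Finset.mul_sum, ← Finset.sum_add_distrib]
  refine Finset.sum_congr rfl fun k _ => ?_
  rw [pow_succ, pow_mul]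
  ring

lemma eq_zero_of_eval_sq_eq_zero {R : ℝ[X]}
    (h : ∀ y : ℂ, y ≠ 0 → (R.map (algebraMap ℝ ℂ)).eval (y ^ 2) = 0) : R = 0 := by
  suffices R.map (algebraMap ℝ ℂ) = 0 from
    (Polynomial.map_eq_zero_iff (algebraMap ℝ ℂ).injective).1 this
  refine eq_zero_of_infinite_isRoot _ ((Set.finite_singleton 0).infinite_compl.mono fun w hw => ?_)
  obtain ⟨y, rfl⟩ := IsAlgClosed.exists_pow_nat_eq w two_pos
  exact h y (by rintro rfl; simp at hw)

lemma oddPart_eq_zero_of_eval_neg (P : ℝ[X])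
    (h : ∀ y : ℂ, (P.map (algebraMap ℝ ℂ)).eval (-y) = (P.map (algebraMap ℝ ℂ)).eval y) :
    oddPart P = 0 := by
  refine eq_zero_of_eval_sq_eq_zero fun y hy => (mul_eq_zero.1 ?_).resolve_left hy
  have hy' := h y
  rw [eval_map_eq_evenPart_add_oddPart P (-y), eval_map_eq_evenPart_add_oddPart P y, neg_sq] at hy'
  linear_combination -hy' / 2

lemma evenPart_eq_zero_of_eval_neg (P : ℝ[X])
    (h : ∀ y : ℂ, (P.map (algebraMap ℝ ℂ)).eval (-y) = -(P.map (algebraMap ℝ ℂ)).eval y) :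
    evenPart P = 0 := by
  refine eq_zero_of_eval_sq_eq_zero fun y _ => ?_
  have hy' := h y
  rw [eval_map_eq_evenPart_add_oddPart P (-y), eval_map_eq_evenPart_add_oddPart P y, neg_sq] at hy'
  linear_combination hy' / 2

theorem Multiset.prod_map_lt_prod_map_of_lt {ι R : Type*} [CommSemiring R] [PartialOrder R]
    [IsStrictOrderedRing R] {s : Multiset ι} {f g : ι → R} (hf : ∀ i ∈ s, 0 ≤ f i)
    (hg : ∀ i ∈ s, 0 < g i) (hle : ∀ i ∈ s, f i ≤ g i) {j : ι} (hj : j ∈ s) (hlt : f j < g j) :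
    (s.map f).prod < (s.map g).prod := by
  classical
  have hs : ∀ i ∈ s.erase j, i ∈ s := fun i hi => Multiset.mem_of_mem_erase hi
  rw [← Multiset.cons_erase hj, Multiset.map_cons, Multiset.map_cons, Multiset.prod_cons,
    Multiset.prod_cons]
  exact mul_lt_mul_of_nonneg_of_pos hlt
    (Multiset.prod_map_le_prod_map₀ f g (fun i hi => hf i (hs i hi)) fun i hi => hle i (hs i hi))
    (hf j hj) (Multiset.prod_pos fun a ha => by
      obtain ⟨i, hi, rfl⟩ := Multiset.mem_map.1 ha
      exact hg i (hs i hi))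

namespace Polynomial

lemma norm_eval_eq_prod_roots (Q : ℂ[X]) (w : ℂ) :
    ‖Q.eval w‖ = ‖Q.leadingCoeff‖ * (Q.roots.map fun r => ‖w - r‖).prod := by
  rw [(IsAlgClosed.splits Q).eval_eq_prod_roots, norm_mul, ← normHom_apply (Multiset.prod _),
    map_multiset_prod, Multiset.map_map]
  rfl

/-- Reflecting `z` in the imaginary axis brings it closer to every root in the closed left
half-plane, strictly closer to those off the axis. -/
lemma re_roots_eq_zero_of_norm_eval_neg_conj_eq {Q : ℂ[X]} {z : ℂ} (hz : 0 < z.re)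
    (hQz : Q.eval z ≠ 0) (hroots : ∀ r ∈ Q.roots, r.re ≤ 0)
    (heq : ‖Q.eval (-conj z)‖ = ‖Q.eval z‖) : ∀ r ∈ Q.roots, r.re = 0 := by
  by_contra! ⟨r₀, hr₀, hne⟩
  have hQ : Q ≠ 0 := by rintro rfl; simp at hQz
  have hdist : ∀ r ∈ Q.roots, 0 < ‖z - r‖ := fun r hr =>
    norm_pos_iff.2 (sub_ne_zero.2 fun h => hQz (h ▸ isRoot_of_mem_roots hr))
  refine heq.not_lt ?_
  rw [norm_eval_eq_prod_roots, norm_eval_eq_prod_roots]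
  refine mul_lt_mul_of_pos_left ?_ (norm_pos_iff.2 (leadingCoeff_ne_zero.2 hQ))
  exact Multiset.prod_map_lt_prod_map_of_lt (fun _ _ => norm_nonneg _) hdist
    (fun r hr => Complex.norm_neg_conj_sub_le hz (hroots r hr)) hr₀
    (Complex.norm_neg_conj_sub_lt hz ((hroots r₀ hr₀).lt_of_ne hne))

lemma eval_map_ofReal_conj (P : ℝ[X]) (w : ℂ) :
    (P.map (algebraMap ℝ ℂ)).eval (conj w) = conj ((P.map (algebraMap ℝ ℂ)).eval w) := by
  simp only [eval_map_algebraMap]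
  exact aeval_algHom_apply Complex.conjAe w P

lemma roots_map_ofReal_map_conj (P : ℝ[X]) :
    (P.map (algebraMap ℝ ℂ)).roots.map conj = (P.map (algebraMap ℝ ℂ)).roots := by
  have hconj : (P.map (algebraMap ℝ ℂ)).map (starRingEnd ℂ) = P.map (algebraMap ℝ ℂ) := by
    rw [Polynomial.map_map]
    congr 1
    ext
    simp
  conv_rhs => rw [← hconj]
  exact ((IsAlgClosed.splits _).roots_map_of_injective (RingHom.injective _)).symm

/-- Roots on the imaginary axis come in pairs `r, -r = conj r`, so `P` is even or odd. -/
lemma eval_map_ofReal_neg_of_re_roots_eq_zero (P : ℝ[X])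
    (hre : ∀ r ∈ (P.map (algebraMap ℝ ℂ)).roots, r.re = 0) (y : ℂ) :
    (P.map (algebraMap ℝ ℂ)).eval (-y) = (-1) ^ P.natDegree * (P.map (algebraMap ℝ ℂ)).eval y := by
  set Q := P.map (algebraMap ℝ ℂ)
  have hsplits := IsAlgClosed.splits Q
  have hneg : Q.roots.map (-·) = Q.roots := by
    conv_rhs => rw [← roots_map_ofReal_map_conj P]
    exact Multiset.map_congr rfl fun r hr => Complex.ext (by simp [hre r hr]) (by simp)
  have hcard : Q.roots.card = P.natDegree := by
    rw [← hsplits.natDegree_eq_card_roots, natDegree_map]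
  calc Q.eval (-y) = Q.leadingCoeff * (Q.roots.map fun r => -1 * (y - -r)).prod := by
        rw [hsplits.eval_eq_prod_roots]
        congr 2
        exact Multiset.map_congr rfl fun r _ => by ring
    _ = (-1) ^ P.natDegree * (Q.leadingCoeff * ((Q.roots.map (-·)).map (y - ·)).prod) := by
        rw [Multiset.prod_map_mul, Multiset.map_const', Multiset.prod_replicate, hcard,
          Multiset.map_map, Function.comp_def]
        ring
    _ = (-1) ^ P.natDegree * Q.eval y := by
        rw [hneg, hsplits.eval_eq_prod_roots]

end Polynomial

lemma evenPart_eq_zero_or_oddPart_eq_zero_of_norm_eval_neg_eq (P : ℝ[X])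
    (hstable : ∀ z : ℂ, 0 < z.re → (P.map (algebraMap ℝ ℂ)).eval z ≠ 0) {z : ℂ} (hz : 0 < z.re)
    (heq : ‖(P.map (algebraMap ℝ ℂ)).eval (-z)‖ = ‖(P.map (algebraMap ℝ ℂ)).eval z‖) :
    evenPart P = 0 ∨ oddPart P = 0 := by
  have hroots : ∀ r ∈ (P.map (algebraMap ℝ ℂ)).roots, r.re ≤ 0 := fun r hr =>
    not_lt.1 fun hr' => hstable r hr' (isRoot_of_mem_roots hr)
  have heq' : ‖(P.map (algebraMap ℝ ℂ)).eval (-conj z)‖ = ‖(P.map (algebraMap ℝ ℂ)).eval z‖ := by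
    rw [← map_neg, eval_map_ofReal_conj, Complex.norm_conj, heq]
  have hparity := eval_map_ofReal_neg_of_re_roots_eq_zero P
    (re_roots_eq_zero_of_norm_eval_neg_conj_eq hz (hstable z hz) hroots heq')
  rcases Nat.even_or_odd P.natDegree with hn | hn
  · exact .inr <| oddPart_eq_zero_of_eval_neg P fun y => by
      rw [hparity, hn.neg_one_pow, one_mul]
  · exact .inl <| evenPart_eq_zero_of_eval_neg P fun y => by
      rw [hparity, hn.neg_one_pow, neg_one_mul]

theorem stmt10_general (P : Polynomial ℝ)
    (hstable : ∀ z : ℂ, 0 < z.re → (P.map (algebraMap ℝ ℂ)).eval z ≠ 0)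
    (hE : evenPart P ≠ 0) (hO : oddPart P ≠ 0) :
    (∀ z : ℂ, ((evenPart P).map (algebraMap ℝ ℂ)).eval z = 0 → ∃ x : ℝ, x ≤ 0 ∧ z = (x : ℂ)) ∧
      (∀ z : ℂ, ((oddPart P).map (algebraMap ℝ ℂ)).eval z = 0 → ∃ x : ℝ, x ≤ 0 ∧ z = (x : ℂ)) := by
  have hnonpos : ∀ w : ℂ, (∀ s : ℂ, s ^ 2 = w →
      ‖(P.map (algebraMap ℝ ℂ)).eval (-s)‖ = ‖(P.map (algebraMap ℝ ℂ)).eval s‖) →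
      ∃ x : ℝ, x ≤ 0 ∧ w = (x : ℂ) := by
    intro w hw
    by_contra hw'
    obtain ⟨s, hs, hre⟩ := Complex.exists_sq_eq_and_re_pos fun h =>
      hw' ⟨w.re, (Complex.nonpos_iff.1 h).1, Complex.ext rfl (Complex.nonpos_iff.1 h).2⟩
    exact (evenPart_eq_zero_or_oddPart_eq_zero_of_norm_eval_neg_eq P hstable hre
      (hw s hs)).elim hE hO
  refine ⟨fun w hw => hnonpos w fun s hs => ?_, fun w hw => hnonpos w fun s hs => ?_⟩ <;>
    rw [eval_map_eq_evenPart_add_oddPart P (-s), eval_map_eq_evenPart_add_oddPart P s, neg_sq, hs,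
      hw] <;>
    simp

theorem stmt10 (P : Polynomial ℝ)
    (hstable : ∀ z : ℂ, 0 < z.re → (P.map (algebraMap ℝ ℂ)).eval z ≠ 0)
    (hsign : ∀ i j : ℕ, P.coeff i ≠ 0 → P.coeff j ≠ 0 → 0 < P.coeff i * P.coeff j)
    (hE : evenPart P ≠ 0) (hO : oddPart P ≠ 0) :
    (∀ z : ℂ, ((evenPart P).map (algebraMap ℝ ℂ)).eval z = 0 → ∃ x : ℝ, x ≤ 0 ∧ z = (x : ℂ)) ∧
      (∀ z : ℂ, ((oddPart P).map (algebraMap ℝ ℂ)).eval z = 0 → ∃ x : ℝ, x ≤ 0 ∧ z = (x : ℂ)) :=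
  stmt10_general P hstable hE hO
end
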